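/- There exist absolute constants κ > 0 and c′ > 0 such that: for all integers q ≥ 2, N ≥ 2, g ≥ 2, k ≥ 2 and all real numbers θ_1, …, θ_{2g} satisfying the Artin-type bound, if log g > κ log(Nq) then (log g)^{-c′N/q^k} · exp(-c′N/√q) ≤ ∏_{l=1}^{2g} |1 - q^{-(2k-1)/2} e(θ_l)| / ((1-q^{-k})(1-q^{1-k})) ≤ (log g)^{c′N/q^k} · exp(c′N/√q). -/

import Mathlib

/-!
With `r = q^{-(2k-1)/2}`, `x = q^{1-k}` and `y = q^{-k}`, the Taylor series of the logarithm gives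
`log ∏ |1 - r e(θ_l)| = -Re ∑_{m ≥ 1} m⁻¹ ∑_l (r e(θ_l))^m`, and the Artin-type bound says exactly
that the inner power sum is at most `(N-1)(x^m + y^m)` in norm. Summing the geometric series and
bounding `log((1-x)(1-y))` directly gives `|log ζ_X(k)| ≤ 4N x ≤ 4N/√q`. The factors
`(log g)^{±c'N/q^k}` only weaken the bounds, since `log g > log(Nq) ≥ log 4 > 1`.
-/

open Finset

/-- `e θ = exp(2πiθ)`. -/
noncomputable def e (θ : ℝ) : ℂ := Complex.exp (2 * Real.pi * Complex.I * θ)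

/-- The Artin-type bound: for every `m ≥ 1`,
`|∑_{l=1}^{2g} e(mθ_l)| ≤ (N-1)(q^m+1)q^{-m/2}`. -/
def ArtinBound (q N g : ℕ) (θ : ℕ → ℝ) : Prop :=
  ∀ m : ℕ, 1 ≤ m →
    ‖∑ l ∈ Finset.range (2 * g), e ((m : ℝ) * θ l)‖ ≤
      ((N : ℝ) - 1) * ((q : ℝ) ^ m + 1) * (q : ℝ) ^ (-(m : ℝ) / 2)

lemma norm_e (θ : ℝ) : ‖e θ‖ = 1 := by
  rw [e, Complex.norm_exp]
  simp

lemma e_pow (θ : ℝ) (m : ℕ) : e θ ^ m = e (m * θ) := by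
  rw [e, e, ← Complex.exp_nat_mul]
  push_cast
  ring_nf

lemma abs_log_one_sub_le {t : ℝ} (ht₀ : 0 ≤ t) (ht₁ : t < 1) :
    |Real.log (1 - t)| ≤ t / (1 - t) := by
  have hpos : 0 < 1 - t := by linarith
  have hlow := Real.one_sub_inv_le_log_of_pos hpos
  have hup := Real.log_le_sub_one_of_pos hpos
  rw [abs_le]
  constructor
  · calc -(t / (1 - t)) = 1 - (1 - t)⁻¹ := by field_simp; ring
      _ ≤ _ := hlow
  · linarith [div_nonneg ht₀ hpos.le]

lemma rpow_sub_half_pow_mul {q : ℝ} (hq : 0 < q) (k : ℝ) (m : ℕ) :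
    (q ^ (-(2 * k - 1) / 2)) ^ m * ((q ^ m + 1) * q ^ (-(m : ℝ) / 2)) =
      (q ^ (1 - k)) ^ m + (q ^ (-k)) ^ m := by
  simp only [← Real.rpow_natCast, ← Real.rpow_mul hq.le, add_mul, mul_add, one_mul,
    ← Real.rpow_add hq]
  ring_nf

lemma abs_log_prod_norm_one_sub_le {ι : Type*} (s : Finset ι) {w : ι → ℂ}
    (hw : ∀ l ∈ s, ‖w l‖ < 1) {b : ℕ → ℝ} {B : ℝ} (hb : HasSum b B)
    (hbound : ∀ n, ‖∑ l ∈ s, w l ^ (n + 1)‖ ≤ b n) :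
    |Real.log (∏ l ∈ s, ‖1 - w l‖)| ≤ B := by
  have hne : ∀ l ∈ s, 1 - w l ≠ 0 := fun l hl ↦ sub_ne_zero.mpr fun h ↦ by
    simpa [← h] using hw l hl
  have hsum : HasSum (fun n : ℕ ↦ ∑ l ∈ s, w l ^ (n + 1) / (n + 1))
      (-∑ l ∈ s, Complex.log (1 - w l)) := by
    rw [← sum_neg_distrib]
    exact hasSum_sum fun l hl ↦ Complex.hasSum_taylorSeries_neg_log' (hw l hl)
  have hterm : ∀ n : ℕ, ‖∑ l ∈ s, w l ^ (n + 1) / (n + 1)‖ ≤ b n := fun n ↦ by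
    rw [← sum_div, norm_div]
    refine (div_le_self (norm_nonneg _) ?_).trans (hbound n)
    rw [← Nat.cast_add_one, Complex.norm_natCast]
    exact_mod_cast Nat.le_add_left 1 n
  have hlog : Real.log (∏ l ∈ s, ‖1 - w l‖) = -(-∑ l ∈ s, Complex.log (1 - w l)).re := by
    rw [Real.log_prod fun l hl ↦ norm_ne_zero_iff.mpr (hne l hl), Complex.neg_re, neg_neg,
      Complex.re_sum]
    simp only [Complex.log_re]
  rw [hlog, abs_neg]
  exact (Complex.abs_re_le_norm _).trans (hsum.norm_le_of_bounded hb hterm)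

lemma prod_norm_one_sub_pos {ι : Type*} {s : Finset ι} {w : ι → ℂ}
    (hw : ∀ l ∈ s, ‖w l‖ < 1) : 0 < ∏ l ∈ s, ‖1 - w l‖ :=
  prod_pos fun l hl ↦ by linarith [norm_sub_norm_le (1 : ℂ) (w l), norm_one (α := ℂ), hw l hl]

lemma abs_log_prod_norm_one_sub_div_le {ι : Type*} (s : Finset ι) {w : ι → ℂ}
    (hw : ∀ l ∈ s, ‖w l‖ < 1) {C x y : ℝ} (hC : 0 ≤ C) (hy : 0 ≤ y) (hyx : y ≤ x)
    (hx : x ≤ 1 / 2)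
    (hbound : ∀ m, 1 ≤ m → ‖∑ l ∈ s, w l ^ m‖ ≤ C * (x ^ m + y ^ m)) :
    |Real.log ((∏ l ∈ s, ‖1 - w l‖) / ((1 - y) * (1 - x)))| ≤ 4 * (C + 1) * x := by
  have hx₁ : x < 1 := by linarith
  have hy₁ : y < 1 := by linarith
  have hgeom {t : ℝ} (h₀ : 0 ≤ t) (h₁ : t < 1) :
      HasSum (fun n : ℕ ↦ t ^ (n + 1)) (t / (1 - t)) := by
    simpa only [pow_succ', div_eq_mul_inv] using (hasSum_geometric_of_lt_one h₀ h₁).mul_left t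
  have hnum := abs_log_prod_norm_one_sub_le s hw
    (((hgeom (hy.trans hyx) hx₁).add (hgeom hy hy₁)).mul_left C)
    fun n ↦ hbound (n + 1) (Nat.le_add_left 1 n)
  have hdiv {t : ℝ} (h₀ : 0 ≤ t) (h : t ≤ 1 / 2) : t / (1 - t) ≤ 2 * t := by
    rw [div_le_iff₀ (by linarith)]
    nlinarith
  rw [Real.log_div (prod_norm_one_sub_pos hw).ne' (by nlinarith),
    Real.log_mul (by linarith) (by linarith)]
  have hlogy := abs_log_one_sub_le hy hy₁
  have hlogx := abs_log_one_sub_le (hy.trans hyx) hx₁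
  have hdy := hdiv hy (hyx.trans hx)
  have hdx := hdiv (hy.trans hyx) hx
  calc _ ≤ |Real.log (∏ l ∈ s, ‖1 - w l‖)| + |Real.log (1 - y)| + |Real.log (1 - x)| :=
        (abs_sub _ _).trans (by grw [abs_add_le]; rw [add_assoc])
    _ ≤ C * (x / (1 - x) + y / (1 - y)) + y / (1 - y) + x / (1 - x) := by gcongr
    _ ≤ 4 * (C + 1) * x := by nlinarith

lemma norm_ofReal_rpow_mul_e_lt_one {q a : ℝ} (hq : 1 < q) (ha : a < 0) (θ : ℝ) :
    ‖((q ^ a : ℝ) : ℂ) * e θ‖ < 1 := by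
  rw [norm_mul, norm_e, mul_one, Complex.norm_real, Real.norm_of_nonneg (by positivity)]
  exact Real.rpow_lt_one_of_one_lt_of_neg hq ha

lemma ArtinBound.norm_sum_pow_le {q N g : ℕ} {θ : ℕ → ℝ} (hA : ArtinBound q N g θ)
    (hq : 0 < q) (k : ℝ) {m : ℕ} (hm : 1 ≤ m) :
    ‖∑ l ∈ range (2 * g), ((((q : ℝ) ^ (-(2 * k - 1) / 2) : ℝ) : ℂ) * e (θ l)) ^ m‖ ≤
      ((N : ℝ) - 1) * (((q : ℝ) ^ (1 - k)) ^ m + ((q : ℝ) ^ (-k)) ^ m) := by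
  set r := (q : ℝ) ^ (-(2 * k - 1) / 2)
  have hsum : ∑ l ∈ range (2 * g), ((r : ℂ) * e (θ l)) ^ m =
      ((r ^ m : ℝ) : ℂ) * ∑ l ∈ range (2 * g), e (m * θ l) := by
    simp only [mul_pow, e_pow, mul_sum, Complex.ofReal_pow]
  rw [hsum, norm_mul, Complex.norm_real, Real.norm_of_nonneg (by positivity),
    ← rpow_sub_half_pow_mul (by exact_mod_cast hq)]
  calc r ^ m * ‖∑ l ∈ range (2 * g), e (m * θ l)‖
      ≤ r ^ m * (((N : ℝ) - 1) * ((q : ℝ) ^ m + 1) * (q : ℝ) ^ (-(m : ℝ) / 2)) := by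
        gcongr
        exact hA m hm
    _ = _ := by ring

/-- `|ζ_X(k)|` when the `e(θ_l)` are the normalized inverse zeros of `ζ_X`. -/
noncomputable def zetaValue (q g k : ℕ) (θ : ℕ → ℝ) : ℝ :=
  (∏ l ∈ Finset.range (2 * g),
      ‖1 - (((q : ℝ) ^ (-(2 * (k : ℝ) - 1) / 2) : ℝ) : ℂ) * e (θ l)‖) /
    ((1 - (q : ℝ) ^ (-(k : ℝ))) * (1 - (q : ℝ) ^ (1 - (k : ℝ))))

section

variable {q g k : ℕ} (θ : ℕ → ℝ)

lemma zetaValue_pos (hq : 2 ≤ q) (hk : 2 ≤ k) : 0 < zetaValue q g k θ := by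
  have hq₁ : (1 : ℝ) < q := by exact_mod_cast hq
  have hk₁ : (1 : ℝ) < k := by exact_mod_cast hk
  refine div_pos (prod_norm_one_sub_pos fun l _ ↦
    norm_ofReal_rpow_mul_e_lt_one hq₁ (by linarith) (θ l)) (mul_pos ?_ ?_) <;>
  exact sub_pos.mpr (Real.rpow_lt_one_of_one_lt_of_neg hq₁ (by linarith))

lemma abs_log_zetaValue_le {N : ℕ} (hq : 2 ≤ q) (hN : 1 ≤ N) (hk : 2 ≤ k)
    (hA : ArtinBound q N g θ) : |Real.log (zetaValue q g k θ)| ≤ 4 * N / Real.sqrt q := by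
  have hq₂ : (2 : ℝ) ≤ q := by exact_mod_cast hq
  have hk₂ : (2 : ℝ) ≤ k := by exact_mod_cast hk
  have hN₁ : (1 : ℝ) ≤ N := by exact_mod_cast hN
  have hx : (q : ℝ) ^ (1 - (k : ℝ)) ≤ (q : ℝ)⁻¹ := by
    rw [← Real.rpow_neg_one]
    exact Real.rpow_le_rpow_of_exponent_le (by linarith) (by linarith)
  have hinv : (q : ℝ)⁻¹ ≤ 1 / 2 := by
    rw [one_div]; exact inv_anti₀ two_pos hq₂
  calc |Real.log (zetaValue q g k θ)| ≤ 4 * ((N - 1) + 1) * (q : ℝ) ^ (1 - (k : ℝ)) :=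
        abs_log_prod_norm_one_sub_div_le _
          (fun l _ ↦ norm_ofReal_rpow_mul_e_lt_one (by linarith) (by linarith) (θ l))
          (by linarith) (by positivity)
          (Real.rpow_le_rpow_of_exponent_le (by linarith) (by linarith)) (hx.trans hinv)
          fun m hm ↦ hA.norm_sum_pow_le (by omega) k hm
    _ ≤ 4 * N * (Real.sqrt q)⁻¹ := by
        rw [sub_add_cancel]
        gcongr
        exact hx.trans
          (inv_anti₀ (by positivity) (Real.sqrt_le_self_iff.mpr (.inr (by linarith))))
    _ = 4 * N / Real.sqrt q := by rw [div_eq_mul_inv]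

end

lemma le_and_le_of_abs_log_le {R E L t : ℝ} (hR : 0 < R) (hlog : |Real.log R| ≤ E)
    (hL : 1 ≤ L) (ht : 0 ≤ t) :
    L ^ (-t) * Real.exp (-E) ≤ R ∧ R ≤ L ^ t * Real.exp E := by
  obtain ⟨hlow, hup⟩ := abs_le.mp hlog
  constructor
  · calc L ^ (-t) * Real.exp (-E) ≤ 1 * Real.exp (-E) := by
          gcongr
          exact Real.rpow_le_one_of_one_le_of_nonpos hL (neg_nonpos.mpr ht)
      _ ≤ R := by
          rw [one_mul, ← Real.exp_log hR]
          exact Real.exp_le_exp.mpr hlow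
  · calc R = Real.exp (Real.log R) := (Real.exp_log hR).symm
      _ ≤ 1 * Real.exp E := by rw [one_mul]; exact Real.exp_le_exp.mpr hup
      _ ≤ L ^ t * Real.exp E := by
          gcongr
          exact Real.one_le_rpow hL ht

theorem statement4 :
    ∃ κ c' : ℝ, 0 < κ ∧ 0 < c' ∧
      ∀ (q N g k : ℕ) (θ : ℕ → ℝ), 2 ≤ q → 2 ≤ N → 2 ≤ g → 2 ≤ k →
        ArtinBound q N g θ →
        Real.log g > κ * Real.log (N * q) →
        (Real.log g) ^ (-(c' * N / (q : ℝ) ^ k)) * Real.exp (-(c' * N / Real.sqrt q)) ≤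
            (∏ l ∈ Finset.range (2 * g),
                ‖1 - (((q : ℝ) ^ (-(2 * (k : ℝ) - 1) / 2) : ℝ) : ℂ) * e (θ l)‖) /
              ((1 - (q : ℝ) ^ (-(k : ℝ))) * (1 - (q : ℝ) ^ (1 - (k : ℝ)))) ∧
          (∏ l ∈ Finset.range (2 * g),
              ‖1 - (((q : ℝ) ^ (-(2 * (k : ℝ) - 1) / 2) : ℝ) : ℂ) * e (θ l)‖) /
              ((1 - (q : ℝ) ^ (-(k : ℝ))) * (1 - (q : ℝ) ^ (1 - (k : ℝ)))) ≤
            (Real.log g) ^ (c' * N / (q : ℝ) ^ k) * Real.exp (c' * N / Real.sqrt q) := by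
  refine ⟨1, 4, one_pos, four_pos, fun q N g k θ hq hN _ hk hA hlog ↦ ?_⟩
  have hNq : (4 : ℝ) ≤ N * q := by
    have : 4 ≤ N * q := Nat.mul_le_mul hN hq
    exact_mod_cast this
  have hlog_g : 1 ≤ Real.log g := by
    have hlog4 : 1 < Real.log 4 := by
      rw [show (4 : ℝ) = 2 ^ 2 by norm_num, Real.log_pow, Nat.cast_ofNat]
      linarith [Real.log_two_gt_d9]
    linarith [Real.log_le_log (by norm_num) hNq]
  exact le_and_le_of_abs_log_le (zetaValue_pos θ hq hk)
    (abs_log_zetaValue_le θ hq (by omega) hk hA) hlog_g (by positivity)
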